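/- Let X be a complete metric space that is not shifted. Then: (i) if for every surjective self-isometry g of X and every point x ∈ X there is a positive integer m with g^m(x) = x, then every dense subset of X (with the induced metric) is not shifted; (ii) if X contains no isolated points and every dense subset of X (with the induced metric) is not shifted, then for every surjective self-isometry g of X and every x ∈ X there is a positive integer m with g^m(x) = x. -/

import Mathlib

/-!
(i) An isometric self-embedding `f` of a dense `S ⊆ X` extends, by completeness, to an
isometric self-embedding `g` of `X`, which is onto because `X` is not shifted. Every point of `S`
is then `g`-periodic, hence `f`-periodic, hence in the range of `f`.

(ii) If `x` is not periodic for an isometric self-embedding `g`, remove from `X` its backward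
orbit `B = ⋃ n, (g^[n])⁻¹' {x}`. By injectivity `B` is countable, so by Baire `Bᶜ` is dense.
`g` maps `Bᶜ` into itself and `g x ∈ Bᶜ`, but the only preimage `x` of `g x` lies in `B`:
the restriction of `g` to `Bᶜ` is not onto.
-/

universe u v w

open Function Set

/-- `f` is an isometric (distance-preserving) embedding of metric spaces. -/
def IsIsomEmb {X : Type u} {Y : Type v} [MetricSpace X] [MetricSpace Y] (f : X → Y) : Prop :=
  ∀ a b : X, dist (f a) (f b) = dist a b

/-- `X` embeds isometrically into `Y`. -/
def IsomEmbeds (X : Type u) (Y : Type v) [MetricSpace X] [MetricSpace Y] : Prop :=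
  ∃ f : X → Y, IsIsomEmb f

/-- `X` and `Y` are isometric: there is a surjective isometric embedding of `X` onto `Y`. -/
def IsIsometricTo (X : Type u) (Y : Type v) [MetricSpace X] [MetricSpace Y] : Prop :=
  ∃ f : X → Y, IsIsomEmb f ∧ Surjective f

/-- `X` is not shifted: every isometric self-embedding of `X` is surjective. -/
def NotShifted (X : Type u) [MetricSpace X] : Prop :=
  ∀ f : X → X, IsIsomEmb f → Surjective f

/-- `Y` is universal for the family `M` of metric spaces. -/
def UnivFor {ι : Type w} (M : ι → Type u) [∀ i, MetricSpace (M i)]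
    (Y : Type v) [MetricSpace Y] : Prop :=
  ∀ i, IsomEmbeds (M i) Y

/-- `Y` is minimal universal for the family `M` of metric spaces: `Y` is `M`-universal and
every subset of `Y` (with the induced metric) which is `M`-universal equals `Y`. -/
def MinUnivFor {ι : Type w} (M : ι → Type u) [∀ i, MetricSpace (M i)]
    (Y : Type v) [MetricSpace Y] : Prop :=
  UnivFor M Y ∧ ∀ S : Set Y, UnivFor M ↥S → S = Set.univ

open Topology

lemma isIsomEmb_iff_isometry {X Y : Type*} [MetricSpace X] [MetricSpace Y] {f : X → Y} :
    IsIsomEmb f ↔ Isometry f :=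
  isometry_iff_dist_eq.symm

theorem Isometry.exists_isometry_comp_eq {α X Y : Type*} [PseudoMetricSpace α]
    [PseudoMetricSpace X] [MetricSpace Y] [CompleteSpace Y] {e : α → X} {f : α → Y}
    (he : Isometry e) (hde : DenseRange e) (hf : Isometry f) :
    ∃ g : X → Y, Isometry g ∧ g ∘ e = f := by
  have hdi := he.isUniformInducing.isDenseInducing hde
  let g := hdi.extend f
  have hg_cont : Continuous g :=
    (uniformContinuous_uniformly_extend he.isUniformInducing hde hf.uniformContinuous).continuous
  have hg_comp : g ∘ e = f := funext (hdi.extend_eq hf.continuous)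
  refine ⟨g, isometry_iff_dist_eq.2 fun a b => ?_, hg_comp⟩
  refine hde.induction_on₂ (p := fun a b => dist (g a) (g b) = dist a b) ?_ (fun a b => ?_) a b
  · exact isClosed_eq ((hg_cont.comp continuous_fst).dist (hg_cont.comp continuous_snd))
      (continuous_fst.dist continuous_snd)
  · simp only [← comp_apply (f := g), hg_comp, hf.dist_eq, he.dist_eq]

theorem Function.Semiconj.isPeriodicPt_of_injective {α β : Type*} {fa : α → α} {fb : β → β}
    {e : α → β} (h : Semiconj e fa fb) (he : Injective e) {n : ℕ} {x : α}
    (hx : IsPeriodicPt fb n (e x)) : IsPeriodicPt fa n x :=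
  he ((h.iterate_right n x).trans hx)

theorem notShifted_of_dense_of_forall_mem_periodicPts {X : Type u} [MetricSpace X]
    [CompleteSpace X] (hns : NotShifted X)
    (hper : ∀ g : X → X, Isometry g → Surjective g → ∀ x, x ∈ periodicPts g)
    {S : Set X} (hS : Dense S) : NotShifted S := by
  intro f hf
  obtain ⟨g, hg, hgf⟩ := isometry_subtype_coe.exists_isometry_comp_eq hS.denseRange_val
    (isometry_subtype_coe.comp (isIsomEmb_iff_isometry.1 hf))
  have hsemi : Semiconj ((↑) : S → X) f g := fun s => (congrFun hgf s).symm
  have hg_per := hper g hg (hns g (isIsomEmb_iff_isometry.2 hg))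
  refine fun y => periodicPts_subset_range (f := f) ?_
  obtain ⟨n, hn, hy⟩ := mem_periodicPts.1 (hg_per y)
  exact mk_mem_periodicPts hn (hsemi.isPeriodicPt_of_injective Subtype.val_injective hy)

namespace Function

variable {α : Type*} {g : α → α} {x z : α}

def backwardOrbit (g : α → α) (x : α) : Set α :=
  ⋃ n : ℕ, g^[n] ⁻¹' {x}

lemma mem_backwardOrbit : z ∈ backwardOrbit g x ↔ ∃ n, g^[n] z = x := by
  simp [backwardOrbit]

lemma self_mem_backwardOrbit : x ∈ backwardOrbit g x :=
  mem_backwardOrbit.2 ⟨0, rfl⟩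

lemma mapsTo_compl_backwardOrbit : MapsTo g (backwardOrbit g x)ᶜ (backwardOrbit g x)ᶜ := by
  intro z hz hgz
  obtain ⟨n, hn⟩ := mem_backwardOrbit.1 hgz
  exact hz (mem_backwardOrbit.2 ⟨n + 1, hn⟩)

lemma mem_periodicPts_of_apply_mem_backwardOrbit (h : g x ∈ backwardOrbit g x) :
    x ∈ periodicPts g := by
  obtain ⟨n, hn⟩ := mem_backwardOrbit.1 h
  exact mk_mem_periodicPts n.succ_pos hn

lemma Injective.countable_backwardOrbit (hg : Injective g) : (backwardOrbit g x).Countable :=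
  countable_iUnion fun n => (subsingleton_singleton.preimage (hg.iterate n)).countable

end Function

theorem Set.Countable.dense_compl_of_baireSpace {X : Type*} [TopologicalSpace X] [T1Space X]
    [BaireSpace X] [∀ x : X, (𝓝[≠] x).NeBot] {s : Set X} (hs : s.Countable) : Dense sᶜ := by
  rw [← biUnion_of_singleton s, compl_iUnion₂]
  exact dense_biInter_of_isOpen (fun _ _ => isOpen_compl_singleton) hs
    (fun x _ => dense_compl_singleton x)

theorem NotShifted.mem_of_apply_mem {X : Type u} [MetricSpace X] {S : Set X} (hS : NotShifted S)
    {g : X → X} (hg : Isometry g) (hgS : MapsTo g S S) {x : X} (hx : g x ∈ S) : x ∈ S := by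
  obtain ⟨s, hs⟩ := hS (hgS.restrict g S S) (fun a b => hg.dist_eq a b) ⟨g x, hx⟩
  rw [← hg.injective (congrArg Subtype.val hs)]
  exact s.2

theorem Isometry.mem_periodicPts_of_forall_dense_notShifted {X : Type u} [MetricSpace X]
    [BaireSpace X] [∀ x : X, (𝓝[≠] x).NeBot] (hdense : ∀ S : Set X, Dense S → NotShifted S)
    {g : X → X} (hg : Isometry g) (x : X) : x ∈ periodicPts g := by
  by_contra hx
  have hB : Dense (backwardOrbit g x)ᶜ :=
    hg.injective.countable_backwardOrbit.dense_compl_of_baireSpace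
  have hgx : g x ∈ (backwardOrbit g x)ᶜ :=
    hx ∘ mem_periodicPts_of_apply_mem_backwardOrbit
  exact (hdense _ hB).mem_of_apply_mem hg mapsTo_compl_backwardOrbit hgx self_mem_backwardOrbit

theorem statement9 {X : Type u} [MetricSpace X] [CompleteSpace X]
    (hns : NotShifted X) :
    ((∀ g : X → X, IsIsomEmb g → Surjective g →
        ∀ x : X, ∃ m : ℕ, 0 < m ∧ g^[m] x = x) →
      ∀ S : Set X, Dense S → NotShifted ↥S) ∧
    ((∀ x : X, Filter.NeBot (nhdsWithin x {x}ᶜ)) →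
      (∀ S : Set X, Dense S → NotShifted ↥S) →
      ∀ g : X → X, IsIsomEmb g → Surjective g →
        ∀ x : X, ∃ m : ℕ, 0 < m ∧ g^[m] x = x) := by
  refine ⟨fun hper S hS => ?_, fun hperfect hdense g hg _ x => ?_⟩
  · exact notShifted_of_dense_of_forall_mem_periodicPts hns
      (fun g hg hsurj => hper g (isIsomEmb_iff_isometry.2 hg) hsurj) hS
  · have : ∀ x : X, (𝓝[≠] x).NeBot := hperfect
    exact (isIsomEmb_iff_isometry.1 hg).mem_periodicPts_of_forall_dense_notShifted hdense x
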